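/- (Purification Bound, backpropagation preserves upper bounds) Let l be a branch and let v be a real-valued function on branches such that v(l_u) ≥ V*(l_u) for every child l_u ∈ Children(l, i) of every unused feature i. Then for every unused feature i, the estimate q(l, i) := −λ + ∑_{l_u ∈ Children(l, i)} v(l_u) satisfies q(l, i) ≥ Q*(l, i); and the updated estimate v(l) := max{ H(l), max over unused i of q(l, i) } satisfies v(l) ≥ V*(l). -/

import Mathlib

open Finset

/-- A branch: for each feature, either unused (`none`) or fixed to a category. -/
abbrev Branch (q : ℕ) (C : Fin q → ℕ) : Type := ∀ i : Fin q, Option (Fin (C i))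

/-- States: `Sum.inl l` is the (non-terminal) branch `l`, `Sum.inr l` is its terminal state `l̄`. -/
abbrev BState (q : ℕ) (C : Fin q → ℕ) : Type := Branch q C ⊕ Branch q C

/-- The root branch `Ω`. -/
def root (q : ℕ) (C : Fin q → ℕ) : Branch q C := fun _ => none

/-- The child of `l` obtained by fixing unused feature `i` to category `j`. -/
def child {q : ℕ} {C : Fin q → ℕ} (l : Branch q C) (i : Fin q) (j : Fin (C i)) : Branch q C :=
  Function.update l i (some j)

/-- `Children(l, i)`. -/
def childrenF {q : ℕ} {C : Fin q → ℕ} (l : Branch q C) (i : Fin q) : Finset (Branch q C) :=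
  Finset.univ.image (fun j : Fin (C i) => child l i j)

/-- A policy: `act l = none` is the terminal action `ā`, `act l = some i` splits on the
unused feature `i`. -/
structure Policy (q : ℕ) (C : Fin q → ℕ) where
  act : Branch q C → Option (Fin q)
  valid : ∀ l i, act l = some i → l i = none

/-- Transition set of the action taken by `π` at branch `l`. -/
def stepSet {q : ℕ} {C : Fin q → ℕ} (π : Policy q C) (l : Branch q C) : Finset (BState q C) :=
  match π.act l with
  | none => {Sum.inr l}
  | some i => (childrenF l i).image Sum.inl

/-- Trajectory of policy `π` from branch `l`. -/
def traj {q : ℕ} {C : Fin q → ℕ} (π : Policy q C) (l : Branch q C) : ℕ → Finset (BState q C)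
  | 0 => {Sum.inl l}
  | t + 1 => (traj π l t).biUnion
      (fun s => Sum.elim (fun lu => stepSet π lu) (fun lu => ({Sum.inr lu} : Finset (BState q C))) s)

/-- `τ_l^π`: minimal time `t ≥ 1` at which the trajectory consists of terminal states only. -/
noncomputable def tau {q : ℕ} {C : Fin q → ℕ} (π : Policy q C) (l : Branch q C) : ℕ :=
  sInf {t : ℕ | 1 ≤ t ∧ ∀ x ∈ traj π l t, x.isRight}

/-- A data point `x` is in branch `l`. -/
def inBranch {q : ℕ} {C : Fin q → ℕ} (l : Branch q C) (x : ∀ i : Fin q, Fin (C i)) : Prop :=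
  ∀ (i : Fin q) (c : Fin (C i)), l i = some c → x i = c

instance {q : ℕ} {C : Fin q → ℕ} (l : Branch q C) (x : ∀ i, Fin (C i)) :
    Decidable (inBranch l x) := by unfold inBranch; infer_instance

/-- `n(l)`: number of data points in `l`. -/
def nIn {q K : ℕ} {C : Fin q → ℕ} (D : Multiset ((∀ i : Fin q, Fin (C i)) × Fin K))
    (l : Branch q C) : ℕ :=
  (D.filter (fun p => inBranch l p.1)).card

/-- `n_k(l)`: number of data points in `l` of class `k`. -/
def nk {q K : ℕ} {C : Fin q → ℕ} (D : Multiset ((∀ i : Fin q, Fin (C i)) × Fin K))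
    (l : Branch q C) (k : Fin K) : ℕ :=
  (D.filter (fun p => inBranch l p.1 ∧ p.2 = k)).card

/-- `H(l) = (max_k n_k(l)) / n`. -/
noncomputable def Hb {q K : ℕ} {C : Fin q → ℕ} (D : Multiset ((∀ i : Fin q, Fin (C i)) × Fin K))
    (l : Branch q C) : ℝ :=
  ((Finset.univ.sup (fun k : Fin K => nk D l k) : ℕ) : ℝ) / (Multiset.card D : ℝ)

/-- Reward collected at a state of the trajectory: `H(l)` for the terminal action,
`-λ` for a split action, `0` at terminal states. -/
noncomputable def rew {q K : ℕ} {C : Fin q → ℕ}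
    (D : Multiset ((∀ i : Fin q, Fin (C i)) × Fin K)) (lam : ℝ) (π : Policy q C) :
    BState q C → ℝ
  | Sum.inl lu => match π.act lu with
      | none => Hb D lu
      | some _ => -lam
  | Sum.inr _ => 0

/-- Value `V^π(l)`. -/
noncomputable def V {q K : ℕ} {C : Fin q → ℕ}
    (D : Multiset ((∀ i : Fin q, Fin (C i)) × Fin K)) (lam : ℝ)
    (π : Policy q C) (l : Branch q C) : ℝ :=
  ∑ t ∈ Finset.range (tau π l), ∑ x ∈ traj π l t, rew D lam π x

/-- State-action value `Q^π(l, a)`. -/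
noncomputable def Qv {q K : ℕ} {C : Fin q → ℕ}
    (D : Multiset ((∀ i : Fin q, Fin (C i)) × Fin K)) (lam : ℝ)
    (π : Policy q C) (l : Branch q C) : Option (Fin q) → ℝ
  | none => Hb D l
  | some i => -lam + ∑ j : Fin (C i), V D lam π (child l i j)

/-- The available actions `A(l)`. -/
def Avail {q : ℕ} {C : Fin q → ℕ} (l : Branch q C) : Finset (Option (Fin q)) :=
  insert none ((Finset.univ.filter (fun i : Fin q => l i = none)).image some)

theorem Avail_nonempty {q : ℕ} {C : Fin q → ℕ} (l : Branch q C) : (Avail l).Nonempty :=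
  ⟨none, Finset.mem_insert_self _ _⟩

/-- The sub-DT of `π` rooted in `l`: the branches whose terminal states constitute
the trajectory at time `τ_l^π`. -/
noncomputable def subDTof {q : ℕ} {C : Fin q → ℕ} (π : Policy q C) (l : Branch q C) : Finset (Branch q C) :=
  (traj π l (tau π l)).image (Sum.elim id id)

/-- `SubDT l T m`: `T` is a sub-DT rooted in `l` obtained by `m` split operations. -/
inductive SubDT {q : ℕ} {C : Fin q → ℕ} : Branch q C → Finset (Branch q C) → ℕ → Prop
  | leaf (l : Branch q C) : SubDT l {l} 0
  | split (l : Branch q C) (T : Finset (Branch q C)) (m : ℕ) (l' : Branch q C) (i : Fin q)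
      (hT : SubDT l T m) (hmem : l' ∈ T) (hnone : l' i = none) :
      SubDT l (T.erase l' ∪ childrenF l' i) (m + 1)

/-- `H(T) = ∑_{l ∈ T} H(l)`. -/
noncomputable def HT {q K : ℕ} {C : Fin q → ℕ}
    (D : Multiset ((∀ i : Fin q, Fin (C i)) × Fin K)) (T : Finset (Branch q C)) : ℝ :=
  ∑ l ∈ T, Hb D l

/-- `splits(l)`: number of features used by branch `l`. -/
def nsplits {q : ℕ} {C : Fin q → ℕ} (l : Branch q C) : ℕ :=
  (Finset.univ.filter (fun i : Fin q => l i ≠ none)).card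

/-!
The Bellman equation `V^π(l) = Q^π(l, π(l))` holds for every policy `π`, in particular for an
optimal one. Its proof rests on the fact that splitting `l` on feature `i` makes the trajectory
from `l` at time `t + 1` the union of the trajectories from the children at time `t`, and these
are pairwise disjoint because a trajectory never forgets a fixed feature while the children
disagree on feature `i`; trajectories end after at most `q + 1` steps since every split fixes
one more feature. Given the Bellman equation, `Q*(l, i) ≤ q(l, i)` is termwise monotonicity of
the sum over children, and `V*(l) = Q*(l, π*(l))` is bounded by `H(l)` or by some `q(l, i)`.
-/

section Trajectory

variable {q : ℕ} {C : Fin q → ℕ}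

@[simp]
lemma child_apply_self (l : Branch q C) (i : Fin q) (j : Fin (C i)) : child l i j i = some j := by
  simp [child]

lemma child_apply_of_ne (l : Branch q C) {i i' : Fin q} (j : Fin (C i)) (h : i' ≠ i) :
    child l i j i' = l i' :=
  Function.update_of_ne h _ _

lemma child_injective (l : Branch q C) (i : Fin q) : Function.Injective (child l i) := by
  intro j j' h
  simpa using congrFun h i

lemma nsplits_child {l : Branch q C} {i : Fin q} (h : l i = none) (j : Fin (C i)) :
    nsplits (child l i j) = nsplits l + 1 := by
  have hused : univ.filter (fun i' => child l i j i' ≠ none) =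
      insert i (univ.filter (fun i' => l i' ≠ none)) := by
    ext i'
    by_cases hi' : i' = i
    · subst hi'; simp
    · simp [child_apply_of_ne _ _ hi', hi']
  rw [nsplits, hused, card_insert_of_notMem (by simp [h]), nsplits]

lemma nsplits_le (l : Branch q C) : nsplits l ≤ q := by
  simpa [nsplits] using card_filter_le (univ : Finset (Fin q)) _

variable (π : Policy q C)

lemma stepSet_of_act_eq_none {l : Branch q C} (h : π.act l = none) :
    stepSet π l = {Sum.inr l} := by
  simp [stepSet, h]

lemma stepSet_of_act_eq_some {l : Branch q C} {i : Fin q} (h : π.act l = some i) :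
    stepSet π l = (childrenF l i).image Sum.inl := by
  simp [stepSet, h]

lemma mem_traj_succ {l : Branch q C} {t : ℕ} {x : BState q C} :
    x ∈ traj π l (t + 1) ↔
      (∃ l', Sum.inl l' ∈ traj π l t ∧ x ∈ stepSet π l') ∨
        (∃ l', Sum.inr l' ∈ traj π l t ∧ x = Sum.inr l') := by
  simp [traj, mem_biUnion, Sum.exists]

lemma add_le_nsplits_of_inl_mem_traj {l l' : Branch q C} {t : ℕ}
    (h : Sum.inl l' ∈ traj π l t) : nsplits l + t ≤ nsplits l' := by
  induction t generalizing l' with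
  | zero => simp_all [traj]
  | succ t ih =>
    obtain ⟨l'', hl'', hstep⟩ | ⟨_, _, hx⟩ := (mem_traj_succ π).1 h
    · cases hact : π.act l'' with
      | none => simp [stepSet_of_act_eq_none π hact] at hstep
      | some i =>
        obtain ⟨j, rfl⟩ : ∃ j, child l'' i j = l' := by
          simpa [stepSet_of_act_eq_some π hact, childrenF] using hstep
        have := ih hl''
        rw [nsplits_child (π.valid l'' i hact)]
        omega
    · cases hx

lemma apply_eq_some_of_mem_traj {l : Branch q C} {i : Fin q} {c : Fin (C i)} (hl : l i = some c)
    {t : ℕ} {x : BState q C} (hx : x ∈ traj π l t) : Sum.elim id id x i = some c := by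
  induction t generalizing x with
  | zero => simp_all [traj]
  | succ t ih =>
    obtain ⟨l', hl', hstep⟩ | ⟨l', hl', rfl⟩ := (mem_traj_succ π).1 hx
    · have hl'c : l' i = some c := ih hl'
      cases hact : π.act l' with
      | none => simp_all [stepSet_of_act_eq_none π hact]
      | some i' =>
        obtain ⟨j, rfl⟩ : ∃ j, Sum.inl (child l' i' j) = x := by
          simpa [stepSet_of_act_eq_some π hact, childrenF] using hstep
        have hne : i ≠ i' := by
          rintro rfl
          simp [π.valid l' i hact] at hl'c
        simpa [child_apply_of_ne _ _ hne] using hl'c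
    · exact ih hl'

lemma isRight_of_mem_traj_succ {l : Branch q C} {t : ℕ}
    (h : ∀ x ∈ traj π l t, x.isRight) : ∀ x ∈ traj π l (t + 1), x.isRight := by
  intro x hx
  obtain ⟨l', hl', -⟩ | ⟨l', -, rfl⟩ := (mem_traj_succ π).1 hx
  · simpa using h _ hl'
  · rfl

lemma isRight_of_mem_traj_add_one (l : Branch q C) : ∀ x ∈ traj π l (q + 1), x.isRight := by
  rintro (l' | l') hx
  · have := add_le_nsplits_of_inl_mem_traj π hx
    have := nsplits_le l'
    omega
  · rfl

lemma tau_mem (l : Branch q C) :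
    tau π l ∈ {t : ℕ | 1 ≤ t ∧ ∀ x ∈ traj π l t, x.isRight} :=
  Nat.sInf_mem ⟨q + 1, by omega, isRight_of_mem_traj_add_one π l⟩

lemma tau_le (l : Branch q C) : tau π l ≤ q + 1 :=
  Nat.sInf_le ⟨by omega, isRight_of_mem_traj_add_one π l⟩

lemma isRight_of_mem_traj_of_tau_le {l : Branch q C} {t : ℕ} (ht : tau π l ≤ t) :
    ∀ x ∈ traj π l t, x.isRight := by
  induction t, ht using Nat.le_induction with
  | base => exact (tau_mem π l).2
  | succ t _ ih => exact isRight_of_mem_traj_succ π ih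

lemma traj_succ_of_act_eq_some {l : Branch q C} {i : Fin q} (h : π.act l = some i) (t : ℕ) :
    traj π l (t + 1) = (childrenF l i).biUnion (fun lu => traj π lu t) := by
  induction t with
  | zero => simp [traj, stepSet_of_act_eq_some π h, biUnion_singleton]
  | succ t ih =>
    rw [traj, ih, biUnion_biUnion]
    rfl

lemma disjoint_traj_child (l : Branch q C) (i : Fin q) {j j' : Fin (C i)} (hjj' : j ≠ j')
    (t : ℕ) : Disjoint (traj π (child l i j) t) (traj π (child l i j') t) := by
  rw [disjoint_left]
  intro x hx hx'
  have hj := apply_eq_some_of_mem_traj π (child_apply_self l i j) hx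
  have hj' := apply_eq_some_of_mem_traj π (child_apply_self l i j') hx'
  exact hjj' (Option.some_injective _ (hj.symm.trans hj'))

end Trajectory

section Value

variable {q K : ℕ} {C : Fin q → ℕ} (D : Multiset ((∀ i : Fin q, Fin (C i)) × Fin K)) (lam : ℝ)
  (π : Policy q C)

lemma V_eq_sum_range_of_tau_le {l : Branch q C} {N : ℕ} (hN : tau π l ≤ N) :
    V D lam π l = ∑ t ∈ range N, ∑ x ∈ traj π l t, rew D lam π x := by
  induction N, hN using Nat.le_induction with
  | base => rfl
  | succ N hN ih =>
    have hterminal : ∑ x ∈ traj π l N, rew D lam π x = 0 := by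
      refine sum_eq_zero fun x hx => ?_
      cases x with
      | inl _ => simpa using isRight_of_mem_traj_of_tau_le π hN _ hx
      | inr _ => rfl
    rw [sum_range_succ, ← ih, hterminal, add_zero]

lemma tau_of_act_eq_none {l : Branch q C} (h : π.act l = none) : tau π l = 1 := by
  refine le_antisymm (Nat.sInf_le ⟨le_rfl, ?_⟩) (tau_mem π l).1
  simp [traj, stepSet_of_act_eq_none π h]

lemma sum_rew_traj_succ_of_act_eq_some {l : Branch q C} {i : Fin q} (h : π.act l = some i)
    (t : ℕ) : ∑ x ∈ traj π l (t + 1), rew D lam π x =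
      ∑ j : Fin (C i), ∑ x ∈ traj π (child l i j) t, rew D lam π x := by
  rw [traj_succ_of_act_eq_some π h, sum_biUnion, childrenF,
    sum_image fun j _ j' _ hjj' => child_injective l i hjj']
  simp only [childrenF, coe_image, coe_univ, Set.image_univ]
  rintro _ ⟨j, rfl⟩ _ ⟨j', rfl⟩ hne
  exact disjoint_traj_child π l i (fun hjj' => hne (by rw [hjj'])) t

lemma V_eq_Qv_act (l : Branch q C) : V D lam π l = Qv D lam π l (π.act l) := by
  cases hact : π.act l with
  | none => simp [V, tau_of_act_eq_none π hact, traj, rew, hact, Qv]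
  | some i =>
    have hsplit : ∀ j : Fin (C i), V D lam π (child l i j) =
        ∑ t ∈ range (q + 1), ∑ x ∈ traj π (child l i j) t, rew D lam π x :=
      fun j => V_eq_sum_range_of_tau_le D lam π (tau_le π _)
    rw [V_eq_sum_range_of_tau_le D lam π ((tau_le π l).trans (Nat.le_succ _)), sum_range_succ',
      Qv, sum_congr rfl fun j _ => hsplit j, sum_comm]
    simp only [sum_rew_traj_succ_of_act_eq_some D lam π hact]
    simp [traj, rew, hact, add_comm]

lemma Qv_some_le {l : Branch q C} {i : Fin q} {v : Branch q C → ℝ}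
    (hv : ∀ j, V D lam π (child l i j) ≤ v (child l i j)) :
    Qv D lam π l (some i) ≤ -lam + ∑ j : Fin (C i), v (child l i j) := by
  simp only [Qv]
  gcongr with j
  exact hv j

end Value

theorem purification_bound_backprop_general {q K : ℕ} {C : Fin q → ℕ}
    (D : Multiset ((∀ i : Fin q, Fin (C i)) × Fin K)) (lam : ℝ) (πs : Policy q C)
    (l : Branch q C) (v : Branch q C → ℝ)
    (hv : ∀ (i : Fin q), l i = none → ∀ j : Fin (C i),
        V D lam πs (child l i j) ≤ v (child l i j)) :
    (∀ i : Fin q, l i = none →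
        Qv D lam πs l (some i) ≤ -lam + ∑ j : Fin (C i), v (child l i j)) ∧
    V D lam πs l ≤
      (insert (Hb D l)
          ((Finset.univ.filter (fun i : Fin q => l i = none)).image
            (fun i => -lam + ∑ j : Fin (C i), v (child l i j)))).max'
        (Finset.insert_nonempty _ _) := by
  have hQ : ∀ i, l i = none → Qv D lam πs l (some i) ≤ -lam + ∑ j : Fin (C i), v (child l i j) :=
    fun i hi => Qv_some_le D lam πs (hv i hi)
  refine ⟨hQ, ?_⟩
  rw [V_eq_Qv_act]
  cases hact : πs.act l with
  | none => exact le_max' _ _ (mem_insert_self _ _)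
  | some i =>
    have hi := πs.valid l i hact
    refine (hQ i hi).trans (le_max' _ _ ?_)
    exact mem_insert_of_mem (mem_image_of_mem _ (by simpa using hi))

/-- **Purification Bound, backpropagation.** If `v` upper-bounds the
optimal values `V*` on all children of `l`, then each estimate
`q(l,i) = -λ + ∑_{l_u ∈ Children(l,i)} v(l_u)` upper-bounds `Q*(l,i)`, and the updated
estimate `v(l) = max { H(l), max_i q(l,i) }` upper-bounds `V*(l)`. -/
theorem purification_bound_backprop {q K : ℕ} (hq : 2 ≤ q) (hK : 2 ≤ K)
    {C : Fin q → ℕ} (hC : ∀ i, 2 ≤ C i)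
    (D : Multiset ((∀ i : Fin q, Fin (C i)) × Fin K)) (hD : D ≠ 0)
    (lam : ℝ) (hlam0 : 0 < lam) (hlam1 : lam < 1)
    (πs : Policy q C)
    (hopt : ∀ π : Policy q C, V D lam π (root q C) ≤ V D lam πs (root q C))
    (l : Branch q C) (v : Branch q C → ℝ)
    (hv : ∀ (i : Fin q), l i = none → ∀ j : Fin (C i),
        V D lam πs (child l i j) ≤ v (child l i j)) :
    (∀ i : Fin q, l i = none →
        Qv D lam πs l (some i) ≤ -lam + ∑ j : Fin (C i), v (child l i j)) ∧
    V D lam πs l ≤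
      (insert (Hb D l)
          ((Finset.univ.filter (fun i : Fin q => l i = none)).image
            (fun i => -lam + ∑ j : Fin (C i), v (child l i j)))).max'
        (Finset.insert_nonempty _ _) :=
  purification_bound_backprop_general D lam πs l v hv
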